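/- If a 2-input-2-output correlation arises from local projective measurements on a pure state |ψ⟩ ∈ ℂ²⊗ℂ² and satisfies Hardy's conditions h(0,1|0,1) = h(1,0|1,0) = h(0,0|1,1) = 0 and h(0,0|0,0) > 0, then |ψ⟩ is entangled (not a product state). -/

import Mathlib

/-!
For a product state α ⊗ β every correlation factorises into a product of local expectation
values. Hardy's conditions h(0,1|0,1) = h(1,0|1,0) = 0 together with h(0,0|0,0) ≠ 0 make the
local expectations of E 1 1 and F 1 1 vanish, so E 1 0 = 1 - E 1 1 and F 1 0 = 1 - F 1 1 have
expectations ‖α‖² and ‖β‖². The condition h(0,0|1,1) = 0 then forces α = 0 or β = 0, which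
contradicts h(0,0|0,0) ≠ 0.
-/

open Kronecker

/-- The correlation ⟨ψ| E ⊗ F |ψ⟩ for a two-qubit pure state ψ. -/
noncomputable def stateCorr (ψ : Fin 2 × Fin 2 → ℂ)
    (E F : Matrix (Fin 2) (Fin 2) ℂ) : ℂ :=
  dotProduct (star ψ) ((E ⊗ₖ F).mulVec ψ)

/-- A pair of orthogonal projections on ℂ² summing to the identity. -/
def IsProjectivePair (P : Fin 2 → Matrix (Fin 2) (Fin 2) ℂ) : Prop :=
  (∀ a, (P a).IsHermitian) ∧ (∀ a, P a * P a = P a) ∧ P 0 + P 1 = 1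

open Matrix

noncomputable def expectation {n : Type*} [Fintype n] (v : n → ℂ) (A : Matrix n n ℂ) : ℂ :=
  star v ⬝ᵥ A *ᵥ v

section Expectation

variable {n : Type*} [Fintype n]

theorem expectation_add_of_add_eq_one [DecidableEq n] (v : n → ℂ) {A B : Matrix n n ℂ}
    (hAB : A + B = 1) : expectation v A + expectation v B = star v ⬝ᵥ v := by
  rw [expectation, expectation, ← dotProduct_add, ← add_mulVec, hAB, one_mulVec]

theorem expectation_eq_of_add_eq_one [DecidableEq n] (v : n → ℂ) {A B : Matrix n n ℂ}
    (hAB : A + B = 1) (hB : expectation v B = 0) : expectation v A = star v ⬝ᵥ v := by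
  rw [← expectation_add_of_add_eq_one v hAB, hB, add_zero]

open scoped ComplexOrder in
theorem dotProduct_star_self_ne_zero_of_expectation_ne_zero {v : n → ℂ} {A : Matrix n n ℂ}
    (h : expectation v A ≠ 0) : star v ⬝ᵥ v ≠ 0 := by
  rintro hv
  rw [dotProduct_star_self_eq_zero.mp hv, expectation, mulVec_zero, dotProduct_zero] at h
  exact h rfl

end Expectation

theorem stateCorr_product (α β : Fin 2 → ℂ) (E F : Matrix (Fin 2) (Fin 2) ℂ) :
    stateCorr (fun p => α p.1 * β p.2) E F = expectation α E * expectation β F := by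
  simp only [stateCorr, expectation, dotProduct, mulVec, kroneckerMap_apply,
    Fintype.sum_prod_type, Fin.sum_univ_two, Pi.star_apply, star_mul']
  ring

theorem hardy_implies_entangled_general
    (ψ : Fin 2 × Fin 2 → ℂ)
    (E F : Fin 2 → Fin 2 → Matrix (Fin 2) (Fin 2) ℂ)
    (hE : ∀ x, IsProjectivePair (E x)) (hF : ∀ y, IsProjectivePair (F y))
    (hardy1 : 0 < (stateCorr ψ (E 0 0) (F 0 0)).re)
    (hardy2 : stateCorr ψ (E 0 0) (F 1 1) = 0)
    (hardy3 : stateCorr ψ (E 1 1) (F 0 0) = 0)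
    (hardy4 : stateCorr ψ (E 1 0) (F 1 0) = 0) :
    ¬ ∃ (α β : Fin 2 → ℂ), ψ = fun p => α p.1 * β p.2 := by
  rintro ⟨α, β, rfl⟩
  simp only [stateCorr_product] at hardy1 hardy2 hardy3 hardy4
  have hab : expectation α (E 0 0) * expectation β (F 0 0) ≠ 0 := by
    intro h
    simp [h] at hardy1
  obtain ⟨ha, hb⟩ := mul_ne_zero_iff.mp hab
  have hc : expectation α (E 1 1) = 0 := (mul_eq_zero.mp hardy3).resolve_right hb
  have hd : expectation β (F 1 1) = 0 := (mul_eq_zero.mp hardy2).resolve_left ha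
  rw [expectation_eq_of_add_eq_one α (hE 1).2.2 hc,
    expectation_eq_of_add_eq_one β (hF 1).2.2 hd] at hardy4
  exact mul_ne_zero (dotProduct_star_self_ne_zero_of_expectation_ne_zero ha)
    (dotProduct_star_self_ne_zero_of_expectation_ne_zero hb) hardy4

/-- if a correlation from local projective measurements on a pure
two-qubit state satisfies Hardy's conditions, the state is entangled. -/
theorem hardy_implies_entangled
    (ψ : Fin 2 × Fin 2 → ℂ)
    (hunit : dotProduct (star ψ) ψ = 1)
    (E F : Fin 2 → Fin 2 → Matrix (Fin 2) (Fin 2) ℂ)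
    (hE : ∀ x, IsProjectivePair (E x)) (hF : ∀ y, IsProjectivePair (F y))
    (hardy1 : 0 < (stateCorr ψ (E 0 0) (F 0 0)).re)
    (hardy2 : stateCorr ψ (E 0 0) (F 1 1) = 0)
    (hardy3 : stateCorr ψ (E 1 1) (F 0 0) = 0)
    (hardy4 : stateCorr ψ (E 1 0) (F 1 0) = 0) :
    ¬ ∃ (α β : Fin 2 → ℂ), ψ = fun p => α p.1 * β p.2 :=
  hardy_implies_entangled_general ψ E F hE hF hardy1 hardy2 hardy3 hardy4
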